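/- Unital Archimedean ℓu-rings have the amalgamation property: if Z, A, B are unital Archimedean ℓu-rings and z_A : Z → A, z_B : Z → B are injective unital ℓu-ring morphisms, then there exist a unital Archimedean ℓu-ring E and injective unital ℓu-ring morphisms f_A : A → E and f_B : B → E with f_A ∘ z_A = f_B ∘ z_B. -/

import Mathlib

universe u

/-- An Archimedean-free bundled ℓu-group: an abelian ℓ-group with monotone addition
and a distinguished strong unit `u`. -/
structure LuGroup : Type (u + 1) where
  G : Type u
  [grp : AddCommGroup G]
  [lat : Lattice G]
  add_le_add : ∀ a b c : G, a ≤ b → c + a ≤ c + b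
  u : G
  u_nonneg : 0 ≤ u
  u_strong : ∀ x : G, ∃ n : ℕ, x ≤ n • u

attribute [instance] LuGroup.grp LuGroup.lat

/-- Archimedean ℓ-group. -/
def LuGroup.Arch (L : LuGroup.{u}) : Prop :=
  ∀ x y : L.G, (∀ n : ℕ, n • x ≤ y) → x ≤ 0

/-- A unital ℓu-ring: a commutative ring with lattice order, monotone addition,
`1` a strong unit, product of positives positive, and the f-ring condition. -/
structure LuRing : Type (u + 1) where
  R : Type u
  [ring : CommRing R]
  [lat : Lattice R]
  add_le_add : ∀ a b c : R, a ≤ b → c + a ≤ c + b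
  one_nonneg : (0 : R) ≤ 1
  one_strong : ∀ x : R, ∃ n : ℕ, x ≤ n • (1 : R)
  mul_nonneg : ∀ a b : R, 0 ≤ a → 0 ≤ b → 0 ≤ a * b
  f_ring : ∀ x y z : R, x ⊓ y = 0 → 0 ≤ z → (z * x) ⊓ y = 0

attribute [instance] LuRing.ring LuRing.lat

/-- Archimedean ℓu-ring. -/
def LuRing.Arch (S : LuRing.{u}) : Prop :=
  ∀ x y : S.R, (∀ n : ℕ, n • x ≤ y) → x ≤ 0

/-- A morphism of unital ℓu-rings: a ring homomorphism preserving `⊔` and `⊓`. -/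
def LuRingHom (S T : LuRing.{u}) (f : S.R → T.R) : Prop :=
  (∀ x y, f (x + y) = f x + f y) ∧ (∀ x y, f (x * y) = f x * f y) ∧ f 1 = 1 ∧
  (∀ x y, f (x ⊔ y) = f x ⊔ f y) ∧ (∀ x y, f (x ⊓ y) = f x ⊓ f y)

/-- An ℓu-group morphism from `(G, u)` to an ℓu-ring `(R, 1)`: a group homomorphism
preserving `⊔` and `⊓` and sending `u` to `1`. -/
def LuGroupRingHom (L : LuGroup.{u}) (S : LuRing.{u}) (f : L.G → S.R) : Prop :=
  (∀ x y, f (x + y) = f x + f y) ∧ (∀ x y, f (x ⊔ y) = f x ⊔ f y) ∧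
  (∀ x y, f (x ⊓ y) = f x ⊓ f y) ∧ f L.u = 1

/-! Characters of an ℓu-ring, i.e. unital lattice-group homomorphisms to `ℝ` (which are
automatically multiplicative), separate the points of an Archimedean ℓu-ring: a solid
subgroup maximal among those avoiding a given element is prime, and for a prime solid
subgroup `M` with `1 ∉ M` the supremum of the fractions `p / q` with `(q • x - p • 1)⁻ ∈ M`
is a character vanishing on `M` (a Hölder-type construction). A character is determined by the
positive elements it kills, so characters of `Z` extend along an embedding `Z → B`. Therefore the
pairs of characters of `A` and `B` that agree on `Z` separate the points of `A` and of `B`, and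
evaluation embeds `A` and `B` compatibly into the Archimedean ℓu-ring of bounded real functions
on the set of such pairs. -/

open LatticeOrderedAddCommGroup

lemma exists_intCast_div_btwn {a b : ℝ} (h : a < b) :
    ∃ p q : ℤ, 0 < q ∧ a < p / q ∧ (p / q : ℝ) < b := by
  obtain ⟨r, h1, h2⟩ := exists_rat_btwn h
  have hr : ((r.num : ℤ) : ℝ) / ((r.den : ℤ) : ℝ) = r := by rw [Rat.cast_def]; norm_cast
  exact ⟨r.num, r.den, by exact_mod_cast r.pos, hr ▸ h1, hr ▸ h2⟩

section TotalCone

variable {G : Type*} [AddCommGroup G]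

/-- `P a` reads "`a ≥ 0`" for a total, not necessarily antisymmetric, group preorder in which
`e` is an order unit. -/
structure IsTotalCone (P : G → Prop) (e : G) : Prop where
  add_mem {a b : G} : P a → P b → P (a + b)
  mem_or_neg_mem (a : G) : P a ∨ P (-a)
  neg_notMem : ¬ P (-e)
  exists_nsmul_sub_mem (a : G) : ∃ n : ℕ, P (n • e - a)

def lowerCut (P : G → Prop) (e x : G) : Set ℝ :=
  {r | ∃ p q : ℤ, 0 < q ∧ P (q • x - p • e) ∧ r = p / q}

noncomputable def state (P : G → Prop) (e x : G) : ℝ :=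
  sSup (lowerCut P e x)

namespace IsTotalCone

variable {P : G → Prop} {e x y : G}

lemma zero_mem (hP : IsTotalCone P e) : P 0 := by
  simpa using hP.mem_or_neg_mem 0

lemma unit_mem (hP : IsTotalCone P e) : P e :=
  (hP.mem_or_neg_mem e).resolve_right hP.neg_notMem

lemma nsmul_mem (hP : IsTotalCone P e) {a : G} (ha : P a) : ∀ n : ℕ, P (n • a)
  | 0 => by simpa using hP.zero_mem
  | n + 1 => by rw [succ_nsmul]; exact hP.add_mem (hP.nsmul_mem ha n) ha

lemma zsmul_mem (hP : IsTotalCone P e) {a : G} (ha : P a) {n : ℤ} (hn : 0 ≤ n) : P (n • a) := by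
  lift n to ℕ using hn
  rw [natCast_zsmul]
  exact hP.nsmul_mem ha n

lemma zsmul_unit_notMem (hP : IsTotalCone P e) {n : ℤ} (hn : n < 0) : ¬ P (n • e) := by
  intro h
  have := hP.add_mem h (hP.zsmul_mem hP.unit_mem (by omega : 0 ≤ -n - 1))
  rw [← add_zsmul, show n + (-n - 1) = -1 by ring, neg_one_zsmul] at this
  exact hP.neg_notMem this

lemma div_le_div_of_mem (hP : IsTotalCone P e) {p q p' q' : ℤ} (hq : 0 < q) (hq' : 0 < q')
    (h : P (q • x - p • e)) (h' : P (p' • e - q' • x)) : (p / q : ℝ) ≤ p' / q' := by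
  rw [div_le_div_iff₀ (by exact_mod_cast hq) (by exact_mod_cast hq')]
  by_contra! hlt
  refine hP.zsmul_unit_notMem (n := p' * q - p * q') (by exact_mod_cast (sub_neg.2 hlt)) ?_
  convert hP.add_mem (hP.zsmul_mem h hq'.le) (hP.zsmul_mem h' hq.le) using 1
  module

lemma lowerCut_nonempty (hP : IsTotalCone P e) (x : G) : (lowerCut P e x).Nonempty := by
  obtain ⟨n, hn⟩ := hP.exists_nsmul_sub_mem (-x)
  exact ⟨_, -n, 1, one_pos, by convert hn using 1; module, rfl⟩

lemma bddAbove_lowerCut (hP : IsTotalCone P e) (x : G) : BddAbove (lowerCut P e x) := by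
  obtain ⟨n, hn⟩ := hP.exists_nsmul_sub_mem x
  refine ⟨n, fun _ ⟨p, q, hq, h, hr⟩ => ?_⟩
  simpa [hr] using hP.div_le_div_of_mem hq one_pos h (p' := n) (by simpa using hn)

lemma le_state (hP : IsTotalCone P e) {p q : ℤ} (hq : 0 < q) (h : P (q • x - p • e)) :
    (p / q : ℝ) ≤ state P e x :=
  le_csSup (hP.bddAbove_lowerCut x) ⟨p, q, hq, h, rfl⟩

lemma state_le (hP : IsTotalCone P e) {p q : ℤ} (hq : 0 < q) (h : P (p • e - q • x)) :
    state P e x ≤ p / q :=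
  csSup_le (hP.lowerCut_nonempty x) fun _ ⟨_, _, hq', h', hr⟩ =>
    hr ▸ hP.div_le_div_of_mem hq' hq h' h

lemma state_nonneg (hP : IsTotalCone P e) (hx : P x) : 0 ≤ state P e x := by
  simpa using hP.le_state (p := 0) one_pos (by simpa using hx)

lemma state_unit (hP : IsTotalCone P e) : state P e e = 1 := by
  have h0 : P ((1 : ℤ) • e - (1 : ℤ) • e) := by simpa using hP.zero_mem
  exact le_antisymm (by simpa using hP.state_le one_pos h0) (by simpa using hP.le_state one_pos h0)

lemma state_add_le (hP : IsTotalCone P e) (x y : G) :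
    state P e x + state P e y ≤ state P e (x + y) := by
  rw [state, state, ← csSup_add (hP.lowerCut_nonempty x) (hP.bddAbove_lowerCut x)
    (hP.lowerCut_nonempty y) (hP.bddAbove_lowerCut y)]
  refine csSup_le_csSup (hP.bddAbove_lowerCut (x + y))
    ((hP.lowerCut_nonempty x).add (hP.lowerCut_nonempty y)) ?_
  rintro _ ⟨_, ⟨p, q, hq, h, rfl⟩, _, ⟨p', q', hq', h', rfl⟩, rfl⟩
  refine ⟨p * q' + p' * q, q * q', mul_pos hq hq', ?_, ?_⟩
  · convert hP.add_mem (hP.zsmul_mem h hq'.le) (hP.zsmul_mem h' hq.le) using 1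
    module
  · have : (q : ℝ) ≠ 0 := by exact_mod_cast hq.ne'
    have : (q' : ℝ) ≠ 0 := by exact_mod_cast hq'.ne'
    push_cast
    field_simp

lemma neg_state_le (hP : IsTotalCone P e) (x : G) : -state P e x ≤ state P e (-x) := by
  by_contra! h
  obtain ⟨p, q, hq, h1, h2⟩ := exists_intCast_div_btwn (lt_neg_of_lt_neg h)
  rcases hP.mem_or_neg_mem (q • x - p • e) with hx | hx
  · exact (hP.le_state hq hx).not_gt h1
  · have := hP.le_state (x := -x) (p := -p) hq (by convert hx using 1; module)
    rw [Int.cast_neg, neg_div] at this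
    linarith

lemma state_add (hP : IsTotalCone P e) (x y : G) :
    state P e (x + y) = state P e x + state P e y := by
  refine le_antisymm ?_ (hP.state_add_le x y)
  have := hP.state_add_le (x + y) (-y)
  rw [add_neg_cancel_right] at this
  linarith [hP.neg_state_le y]

lemma state_zero (hP : IsTotalCone P e) : state P e 0 = 0 := by
  have := hP.state_add 0 0
  rw [add_zero] at this
  linarith

lemma state_mono (hP : IsTotalCone P e) (h : P (y - x)) : state P e x ≤ state P e y := by
  have := hP.state_add x (y - x)
  rw [add_sub_cancel] at this
  linarith [hP.state_nonneg h]

end IsTotalCone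

end TotalCone

section SolidSubgroup

variable {G : Type*} [AddCommGroup G] [Lattice G]

lemma exists_maximal_isSolid {d : G} {M₀ : AddSubgroup G} (hM₀ : IsSolid (M₀ : Set G))
    (hd : d ∉ M₀) :
    ∃ M, M₀ ≤ M ∧ Maximal (fun N : AddSubgroup G => IsSolid (N : Set G) ∧ d ∉ N) M := by
  refine zorn_le_nonempty₀ {N : AddSubgroup G | IsSolid (N : Set G) ∧ d ∉ N}
    (fun c hc hchain N hN => ?_) M₀ ⟨hM₀, hd⟩
  have hmem {x : G} : x ∈ sSup c ↔ ∃ K ∈ c, x ∈ K :=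
    AddSubgroup.mem_sSup_of_directedOn ⟨N, hN⟩ hchain.directedOn
  refine ⟨sSup c, ⟨fun x hx y hyx => ?_, fun hdc => ?_⟩, fun _ => le_sSup⟩
  · obtain ⟨K, hK, hxK⟩ := hmem.1 hx
    exact hmem.2 ⟨K, hK, (hc hK).1 hxK hyx⟩
  · obtain ⟨K, hK, hdK⟩ := hmem.1 hdc
    exact (hc hK).2 hdK

variable [AddLeftMono G]

lemma add_inf_le_inf_add_inf {a b c : G} (ha : 0 ≤ a) (hb : 0 ≤ b) (hc : 0 ≤ c) :
    (a + b) ⊓ c ≤ a ⊓ c + b ⊓ c := by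
  rw [inf_add, add_inf, add_inf]
  exact le_inf (le_inf inf_le_left (inf_le_right.trans (le_add_of_nonneg_left ha)))
    (le_inf (inf_le_right.trans (le_add_of_nonneg_right hb))
      (inf_le_right.trans (le_add_of_nonneg_left hc)))

lemma eq_zero_of_abs_nonpos {a : G} (h : |a| ≤ 0) : a = 0 :=
  le_antisymm (abs_le'.1 h).1 (neg_nonpos.1 (abs_le'.1 h).2)

lemma isSolid_bot : IsSolid ((⊥ : AddSubgroup G) : Set G) := fun x hx y hyx => by
  rw [SetLike.mem_coe, AddSubgroup.mem_bot] at hx ⊢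
  exact eq_zero_of_abs_nonpos (hyx.trans (by rw [hx, abs_zero]))

namespace LatticeOrderedAddCommGroup.IsSolid

variable {s : Set G} {x y : G}

lemma mem_of_nonneg_of_le (hs : IsSolid s) (hx : x ∈ s) (hy : 0 ≤ y) (hyx : y ≤ x) : y ∈ s :=
  hs hx ((abs_of_nonneg hy).trans_le (hyx.trans (le_abs_self x)))

lemma abs_mem (hs : IsSolid s) (hx : x ∈ s) : |x| ∈ s := hs hx (abs_abs x).le

lemma posPart_mem (hs : IsSolid s) (hx : x ∈ s) : x⁺ ∈ s :=
  hs.mem_of_nonneg_of_le (hs.abs_mem hx) (posPart_nonneg x)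
    (by rw [← posPart_add_negPart]; exact le_add_of_nonneg_right (negPart_nonneg x))

lemma negPart_mem (hs : IsSolid s) (hx : x ∈ s) : x⁻ ∈ s := by
  simpa using hs.posPart_mem (hs hx (abs_neg x).le)

end LatticeOrderedAddCommGroup.IsSolid

namespace AddSubgroup

def solidColon (M : AddSubgroup G) (hM : IsSolid (M : Set G)) (c : G) (hc : 0 ≤ c) :
    AddSubgroup G where
  carrier := {y | |y| ⊓ c ∈ M}
  zero_mem' := by simp [inf_eq_left.2 hc]
  add_mem' {a b} ha hb := hM.mem_of_nonneg_of_le (M.add_mem ha hb) (le_inf (abs_nonneg _) hc)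
    ((inf_le_inf_right c (abs_add_le a b)).trans
      (add_inf_le_inf_add_inf (abs_nonneg a) (abs_nonneg b) hc))
  neg_mem' := by simp

variable {M : AddSubgroup G} {hM : IsSolid (M : Set G)} {c : G} {hc : 0 ≤ c}

lemma mem_solidColon {y : G} : y ∈ M.solidColon hM c hc ↔ |y| ⊓ c ∈ M := Iff.rfl

lemma isSolid_solidColon : IsSolid (M.solidColon hM c hc : Set G) := fun _ hx _ hyx =>
  hM.mem_of_nonneg_of_le hx (le_inf (abs_nonneg _) hc) (inf_le_inf_right c hyx)

lemma le_solidColon : M ≤ M.solidColon hM c hc := fun _ hy =>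
  hM.mem_of_nonneg_of_le (hM.abs_mem hy) (le_inf (abs_nonneg _) hc) inf_le_left

end AddSubgroup

variable {d e : G} {M : AddSubgroup G}

lemma posPart_mem_or_negPart_mem
    (hM : Maximal (fun N : AddSubgroup G => IsSolid (N : Set G) ∧ d ∉ N) M) (x : G) :
    x⁺ ∈ M ∨ x⁻ ∈ M := by
  by_contra! hx
  have hd {J : AddSubgroup G} {a : G} (hJ : IsSolid (J : Set G)) (hMJ : M ≤ J) (ha : a ∈ J)
      (haM : a ∉ M) : d ∈ J :=
    by_contra fun hdJ => haM (hM.le_of_ge ⟨hJ, hdJ⟩ hMJ ha)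
  have h1 : |d| ⊓ x⁻ ∈ M :=
    hd (J := M.solidColon hM.prop.1 x⁻ (negPart_nonneg x)) AddSubgroup.isSolid_solidColon
      AddSubgroup.le_solidColon (a := x⁺)
      (by rw [AddSubgroup.mem_solidColon, abs_of_nonneg (posPart_nonneg x),
        posPart_inf_negPart_eq_zero]; exact M.zero_mem) hx.1
  have h2 : |d| ⊓ |d| ∈ M :=
    hd (J := M.solidColon hM.prop.1 |d| (abs_nonneg d)) AddSubgroup.isSolid_solidColon
      AddSubgroup.le_solidColon (a := x⁻)
      (by rwa [AddSubgroup.mem_solidColon, abs_of_nonneg (negPart_nonneg x), inf_comm]) hx.2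
  rw [inf_idem] at h2
  exact hM.prop.2 (hM.prop.1 h2 (abs_abs d).ge)

lemma unit_notMem_of_maximal (he0 : 0 ≤ e) (he : ∀ x : G, ∃ n : ℕ, x ≤ n • e)
    (hM : Maximal (fun N : AddSubgroup G => IsSolid (N : Set G) ∧ d ∉ N) M) : e ∉ M := by
  intro heM
  obtain ⟨n, hn⟩ := he |d|
  exact hM.prop.2 (hM.prop.1 (M.nsmul_mem heM n) (by rwa [abs_of_nonneg (nsmul_nonneg he0 n)]))

lemma exists_prime_isSolid (he0 : 0 ≤ e) (he : ∀ x : G, ∃ n : ℕ, x ≤ n • e)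
    {M₀ : AddSubgroup G} (hM₀ : IsSolid (M₀ : Set G)) (hd : d ∉ M₀) :
    ∃ M : AddSubgroup G, M₀ ≤ M ∧ IsSolid (M : Set G) ∧ d ∉ M ∧ e ∉ M ∧
      ∀ x, x⁺ ∈ M ∨ x⁻ ∈ M := by
  obtain ⟨M, hM₀M, hM⟩ := exists_maximal_isSolid hM₀ hd
  exact ⟨M, hM₀M, hM.prop.1, hM.prop.2, unit_notMem_of_maximal he0 he hM,
    posPart_mem_or_negPart_mem hM⟩

lemma isTotalCone_negPart_mem (hM : IsSolid (M : Set G)) (hprime : ∀ x, x⁺ ∈ M ∨ x⁻ ∈ M)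
    (he0 : 0 ≤ e) (he : ∀ x : G, ∃ n : ℕ, x ≤ n • e) (heM : e ∉ M) :
    IsTotalCone (fun a => a⁻ ∈ M) e where
  add_mem {a b} ha hb := hM.mem_of_nonneg_of_le (M.add_mem ha hb) (negPart_nonneg _)
    (sup_le (by rw [neg_add]; exact add_le_add (neg_le_negPart a) (neg_le_negPart b))
      (add_nonneg (negPart_nonneg a) (negPart_nonneg b)))
  mem_or_neg_mem a := (hprime a).symm.imp_right fun h => by rwa [negPart_neg]
  neg_notMem := by rwa [negPart_neg, posPart_eq_self.2 he0]
  exists_nsmul_sub_mem a := by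
    obtain ⟨n, hn⟩ := he a
    exact ⟨n, by rw [negPart_eq_zero.2 (sub_nonneg.2 hn)]; exact M.zero_mem⟩

lemma IsTotalCone.state_eq_zero_of_mem (hP : IsTotalCone (fun a => a⁻ ∈ M) e)
    (hM : IsSolid (M : Set G)) {m : G} (hm : m ∈ M) : state (fun a => a⁻ ∈ M) e m = 0 := by
  have h1 := hP.state_nonneg (hM.negPart_mem hm)
  have h2 := hP.state_nonneg (x := -m) (by rw [negPart_neg]; exact hM.posPart_mem hm)
  have h3 := hP.state_add m (-m)
  rw [add_neg_cancel, hP.state_zero] at h3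
  linarith

lemma IsTotalCone.state_sup (hP : IsTotalCone (fun a => a⁻ ∈ M) e) (hM : IsSolid (M : Set G))
    (hprime : ∀ x, x⁺ ∈ M ∨ x⁻ ∈ M) (x y : G) :
    state (fun a => a⁻ ∈ M) e (x ⊔ y) =
      state (fun a => a⁻ ∈ M) e x ⊔ state (fun a => a⁻ ∈ M) e y := by
  have hle {a b : G} (hab : a ≤ b) : state (fun a => a⁻ ∈ M) e a ≤ state (fun a => a⁻ ∈ M) e b :=
    hP.state_mono (by rw [negPart_eq_zero.2 (sub_nonneg.2 hab)]; exact M.zero_mem)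
  refine le_antisymm ?_ (sup_le (hle le_sup_left) (hle le_sup_right))
  rcases hprime (x - y) with h | h
  · rw [sup_eq_add_posPart_sub, hP.state_add, hP.state_eq_zero_of_mem hM h, add_zero]
    exact le_sup_right
  · rw [sup_comm, sup_eq_add_posPart_sub, hP.state_add, ← negPart_neg, neg_sub,
      hP.state_eq_zero_of_mem hM h, add_zero]
    exact le_sup_left

end SolidSubgroup

lemma apply_eq_mul_of_ker {G : Type*} [AddCommGroup G] [Lattice G] [AddLeftMono G]
    {χ ψ : G →+ ℝ} {e : G} (he : 0 ≤ e) (hχ : ∀ x y, χ (x ⊔ y) = χ x ⊔ χ y) (hχe : χ e = 1)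
    (hψ : Monotone ψ) (hker : ∀ w, 0 ≤ w → χ w = 0 → ψ w = 0) (z : G) :
    ψ z = ψ e * χ z := by
  have hψ0 {w : G} (hw : 0 ≤ w) : 0 ≤ ψ w := by simpa using hψ hw
  -- If `χ z < p / q` then `w = q • z - p • e` has `χ w⁺ = 0`, so `ψ w ≤ 0`.
  have hbound (z : G) {p q : ℤ} (hq : 0 < q) (hz : χ z < p / q) : ψ z ≤ p / q * ψ e := by
    set w := q • z - p • e
    have hqR : (0 : ℝ) < q := by exact_mod_cast hq
    have hχw : χ w < 0 := by
      simp only [w, map_sub, map_zsmul, hχe, zsmul_eq_mul, mul_one]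
      rw [lt_div_iff₀ hqR] at hz
      linarith
    have hw : ψ w ≤ 0 := by
      rw [← posPart_sub_negPart w, map_sub,
        hker _ (posPart_nonneg w) (by rw [posPart_def, hχ, map_zero]; exact sup_eq_right.2 hχw.le)]
      linarith [hψ0 (negPart_nonneg w)]
    simp only [w, map_sub, map_zsmul, zsmul_eq_mul] at hw
    rw [div_mul_eq_mul_div, le_div_iff₀ hqR]
    linarith
  have hle (z : G) : ψ z ≤ ψ e * χ z := by
    by_contra! hlt
    rcases (hψ0 he).eq_or_lt with h0 | hpos
    · obtain ⟨p, q, hq, h1, -⟩ := exists_intCast_div_btwn (lt_add_one (χ z))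
      have := hbound z hq h1
      rw [← h0, mul_zero] at this
      rw [← h0, zero_mul] at hlt
      linarith
    · obtain ⟨p, q, hq, h1, h2⟩ :=
        exists_intCast_div_btwn (show χ z < ψ z / ψ e by rw [lt_div_iff₀ hpos]; linarith)
      have := hbound z hq h1
      rw [lt_div_iff₀ hpos] at h2
      linarith
  have := hle (-z)
  rw [map_neg, map_neg] at this
  linarith [hle z]

instance (S : LuRing.{u}) : AddLeftMono S.R := ⟨fun c _ _ h => S.add_le_add _ _ c h⟩

structure IsChar (S : LuRing.{u}) (φ : S.R → ℝ) : Prop where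
  map_add (x y : S.R) : φ (x + y) = φ x + φ y
  map_sup (x y : S.R) : φ (x ⊔ y) = φ x ⊔ φ y
  map_one : φ 1 = 1

namespace IsChar

variable {S : LuRing.{u}} {φ : S.R → ℝ}

def toAddMonoidHom (h : IsChar S φ) : S.R →+ ℝ := AddMonoidHom.mk' φ h.map_add

lemma map_zero (h : IsChar S φ) : φ 0 = 0 := _root_.map_zero h.toAddMonoidHom

lemma map_sub (h : IsChar S φ) (x y : S.R) : φ (x - y) = φ x - φ y :=
  _root_.map_sub h.toAddMonoidHom x y

lemma map_neg (h : IsChar S φ) (x : S.R) : φ (-x) = -φ x := _root_.map_neg h.toAddMonoidHom x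

lemma map_nsmul (h : IsChar S φ) (n : ℕ) (x : S.R) : φ (n • x) = n * φ x := by
  rw [← nsmul_eq_mul]; exact _root_.map_nsmul h.toAddMonoidHom n x

lemma monotone (h : IsChar S φ) : Monotone φ := fun x y hxy => by
  have := h.map_sup x y
  rw [sup_eq_right.2 hxy] at this
  rw [this]
  exact le_sup_left

lemma nonneg (h : IsChar S φ) {x : S.R} (hx : 0 ≤ x) : 0 ≤ φ x := h.map_zero ▸ h.monotone hx

lemma map_abs (h : IsChar S φ) (x : S.R) : φ |x| = |φ x| := by
  change φ (x ⊔ -x) = φ x ⊔ -φ x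
  rw [h.map_sup, h.map_neg]

lemma map_inf (h : IsChar S φ) (x y : S.R) : φ (x ⊓ y) = φ x ⊓ φ y := by
  rw [← neg_neg (x ⊓ y), neg_inf, h.map_neg, h.map_sup, h.map_neg, h.map_neg, neg_sup, neg_neg,
    neg_neg]

lemma map_mul (h : IsChar S φ) (x y : S.R) : φ (x * y) = φ x * φ y := by
  have hpos {a : S.R} (ha : 0 ≤ a) : φ (a * y) = φ a * φ y := by
    let ψ : S.R →+ ℝ := h.toAddMonoidHom.comp (AddMonoidHom.mulLeft a)
    have hψ : Monotone ψ := fun b c hbc => by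
      have := h.monotone (S.mul_nonneg a (c - b) ha (sub_nonneg.2 hbc))
      rwa [mul_sub, h.map_sub, h.map_zero, sub_nonneg] at this
    have hker (w : S.R) (hw : 0 ≤ w) (hφw : φ w = 0) : ψ w = 0 := by
      obtain ⟨n, hn⟩ := S.one_strong a
      have hle : a * w ≤ n • w := by
        have := S.mul_nonneg _ w (sub_nonneg.2 hn) hw
        rwa [sub_mul, smul_mul_assoc, one_mul, sub_nonneg] at this
      have h1 := h.monotone hle
      rw [h.map_nsmul, hφw, mul_zero] at h1
      exact le_antisymm h1 (h.nonneg (S.mul_nonneg a w ha hw))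
    simpa [ψ, toAddMonoidHom, h.map_one] using
      apply_eq_mul_of_ker (χ := h.toAddMonoidHom) S.one_nonneg h.map_sup h.map_one hψ hker y
  rw [← posPart_sub_negPart x, sub_mul, h.map_sub, h.map_sub, hpos (posPart_nonneg x),
    hpos (negPart_nonneg x), sub_mul]

end IsChar

namespace LuRingHom

variable {S T : LuRing.{u}} {f : S.R → T.R}

lemma map_zero (hf : LuRingHom S T f) : f 0 = 0 := _root_.map_zero (AddMonoidHom.mk' f hf.1)

lemma monotone (hf : LuRingHom S T f) : Monotone f := fun x y hxy => by
  have := hf.2.2.2.1 x y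
  rw [sup_eq_right.2 hxy] at this
  rw [this]
  exact le_sup_left

lemma le_of_map_le (hf : LuRingHom S T f) (hinj : Function.Injective f) {x y : S.R}
    (h : f x ≤ f y) : x ≤ y :=
  sup_eq_right.1 (hinj (by rw [hf.2.2.2.1, sup_eq_right.2 h]))

end LuRingHom

lemma IsChar.comp {S T : LuRing.{u}} {φ : T.R → ℝ} {f : S.R → T.R} (hφ : IsChar T φ)
    (hf : LuRingHom S T f) : IsChar S (φ ∘ f) where
  map_add x y := by simp only [Function.comp_apply, hf.1, hφ.map_add]
  map_sup x y := by simp only [Function.comp_apply, hf.2.2.2.1, hφ.map_sup]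
  map_one := by simp only [Function.comp_apply, hf.2.2.1, hφ.map_one]

variable {S : LuRing.{u}}

lemma exists_isChar_of_notMem {M₀ : AddSubgroup S.R} (hM₀ : IsSolid (M₀ : Set S.R)) {d : S.R}
    (hd : d ∉ M₀) :
    ∃ M : AddSubgroup S.R, M₀ ≤ M ∧ d ∉ M ∧ (∀ x, x⁺ ∈ M ∨ x⁻ ∈ M) ∧
      ∃ φ, IsChar S φ ∧ ∀ m ∈ M, φ m = 0 := by
  obtain ⟨M, hM₀M, hM, hdM, h1M, hprime⟩ := exists_prime_isSolid S.one_nonneg S.one_strong hM₀ hd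
  have hP := isTotalCone_negPart_mem hM hprime S.one_nonneg S.one_strong h1M
  exact ⟨M, hM₀M, hdM, hprime, _, ⟨hP.state_add, hP.state_sup hM hprime, hP.state_unit⟩,
    fun _ => hP.state_eq_zero_of_mem hM⟩

-- A prime solid subgroup avoiding `e⁻`, for `e = 1 - k • |d| ≱ 0`, contains `e⁺`; so its
-- character satisfies `φ e ≤ 0`, that is `1 ≤ k * |φ d|`.
lemma exists_isChar_apply_ne_zero (hS : S.Arch) {d : S.R} (hd : d ≠ 0) :
    ∃ φ, IsChar S φ ∧ φ d ≠ 0 := by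
  obtain ⟨k, hk⟩ : ∃ k : ℕ, ¬ k • |d| ≤ 1 := by
    by_contra! h
    exact hd (eq_zero_of_abs_nonpos (hS |d| 1 h))
  set e : S.R := 1 - k • |d|
  have he : e⁻ ∉ (⊥ : AddSubgroup S.R) := fun h => hk (sub_nonneg.1 (negPart_eq_zero.1 h))
  obtain ⟨M, -, heM, hprime, φ, hφ, hφM⟩ := exists_isChar_of_notMem isSolid_bot he
  refine ⟨φ, hφ, fun hφd => ?_⟩
  have hφe : φ e ≤ 0 := by
    rw [← posPart_sub_negPart e, hφ.map_sub, hφM _ ((hprime e).resolve_right heM)]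
    linarith [hφ.nonneg (negPart_nonneg e)]
  simp only [e, hφ.map_sub, hφ.map_nsmul, hφ.map_abs, hφd, hφ.map_one] at hφe
  norm_num at hφe

-- A character of `S` killing the solid subgroup `M₀` generated by `z` of the positive kernel
-- of `χ` restricts to `χ`, by `apply_eq_mul_of_ker`.
lemma exists_isChar_comp_eq {Z : LuRing.{u}} {z : Z.R → S.R} (hz : LuRingHom Z S z)
    (hinj : Function.Injective z) {χ : Z.R → ℝ} (hχ : IsChar Z χ) :
    ∃ ψ, IsChar S ψ ∧ ψ ∘ z = χ := by
  let M₀ : AddSubgroup S.R :=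
    { carrier := {x | ∃ w, 0 ≤ w ∧ χ w = 0 ∧ |x| ≤ z w}
      zero_mem' := ⟨0, le_rfl, hχ.map_zero, by simp [hz.map_zero]⟩
      add_mem' := fun ⟨w, hw, hχw, hxw⟩ ⟨w', hw', hχw', hxw'⟩ =>
        ⟨w + w', add_nonneg hw hw', by rw [hχ.map_add, hχw, hχw', add_zero],
          (abs_add_le _ _).trans (by rw [hz.1]; exact add_le_add hxw hxw')⟩
      neg_mem' := by simp }
  have hM₀ : IsSolid (M₀ : Set S.R) := fun _ ⟨w, hw, hχw, hxw⟩ _ hyx => ⟨w, hw, hχw, hyx.trans hxw⟩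
  have h1 : (1 : S.R) ∉ M₀ := fun ⟨w, _, hχw, h1w⟩ => by
    rw [abs_of_nonneg S.one_nonneg, ← hz.2.2.1] at h1w
    have := hχ.monotone (hz.le_of_map_le hinj h1w)
    rw [hχ.map_one, hχw] at this
    exact absurd this (by norm_num)
  obtain ⟨M, hM₀M, -, -, ψ, hψ, hψM⟩ := exists_isChar_of_notMem hM₀ h1
  refine ⟨ψ, hψ, funext fun w => ?_⟩
  have := apply_eq_mul_of_ker (χ := hχ.toAddMonoidHom) (ψ := (hψ.comp hz).toAddMonoidHom)
    Z.one_nonneg hχ.map_sup hχ.map_one (hψ.comp hz).monotone (fun w hw hχw =>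
      hψM _ (hM₀M ⟨w, hw, hχw, by
        rw [abs_of_nonneg (by simpa [hz.map_zero] using hz.monotone hw)]⟩)) w
  simpa [IsChar.toAddMonoidHom, hz.2.2.1, hψ.map_one] using this

open scoped BoundedContinuousFunction

lemma mul_inf_eq_zero {R : Type*} [Semiring R] [LinearOrder R] [IsOrderedRing R] {a b c : R}
    (h : a ⊓ b = 0) (hc : 0 ≤ c) : (c * a) ⊓ b = 0 := by
  have ha : 0 ≤ a := h ▸ inf_le_left
  have hb : 0 ≤ b := h ▸ inf_le_right
  rcases le_total a b with hab | hab
  · rw [inf_eq_left.2 hab] at h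
    simp [h, hb]
  · rw [inf_eq_right.2 hab] at h
    rw [h]
    exact inf_eq_right.2 (mul_nonneg hc ha)

noncomputable def boundedFunctions (X : Type u) [TopologicalSpace X] : LuRing.{u} where
  R := X →ᵇ ℝ
  add_le_add _ _ c h := add_le_add_right h c
  one_nonneg _ := zero_le_one
  one_strong f := ⟨⌈‖f‖⌉₊, fun x => by
    simpa using (le_abs_self (f x)).trans ((f.norm_coe_le_norm x).trans (Nat.le_ceil ‖f‖))⟩
  mul_nonneg _ _ hf hg x := mul_nonneg (hf x) (hg x)
  f_ring f g h hfg hh := BoundedContinuousFunction.ext fun x =>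
    mul_inf_eq_zero (congrArg (· x) hfg) (hh x)

lemma boundedFunctions_arch (X : Type u) [TopologicalSpace X] : (boundedFunctions X).Arch :=
  fun (f g : X →ᵇ ℝ) h x => by
    by_contra! hfx
    obtain ⟨n, hn⟩ := exists_lt_nsmul hfx ‖g‖
    have hnx : n • f x ≤ g x := h n x
    exact (hnx.trans ((le_abs_self (g x)).trans (g.norm_coe_le_norm x))).not_gt hn

section CharEval

variable {Ω : Type u} [TopologicalSpace Ω] [DiscreteTopology Ω] {S : LuRing.{u}}
  (ev : Ω → S.R → ℝ) (hev : ∀ ω, IsChar S (ev ω))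

lemma exists_norm_le_of_isChar (a : S.R) : ∃ C : ℝ, ∀ φ, IsChar S φ → ‖φ a‖ ≤ C := by
  obtain ⟨n, hn⟩ := S.one_strong |a|
  refine ⟨n, fun φ hφ => ?_⟩
  have := hφ.monotone hn
  rwa [hφ.map_abs, hφ.map_nsmul, hφ.map_one, mul_one, ← Real.norm_eq_abs] at this

noncomputable def charEval (a : S.R) : Ω →ᵇ ℝ :=
  BoundedContinuousFunction.ofNormedAddCommGroupDiscrete (fun ω => ev ω a) _
    fun ω => (exists_norm_le_of_isChar a).choose_spec (ev ω) (hev ω)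

lemma charEval_apply (a : S.R) (ω : Ω) : charEval ev hev a ω = ev ω a := rfl

lemma luRingHom_charEval : LuRingHom S (boundedFunctions Ω) (charEval ev hev) :=
  ⟨fun x y => BoundedContinuousFunction.ext fun ω => (hev ω).map_add x y,
    fun x y => BoundedContinuousFunction.ext fun ω => (hev ω).map_mul x y,
    BoundedContinuousFunction.ext fun ω => (hev ω).map_one,
    fun x y => BoundedContinuousFunction.ext fun ω => (hev ω).map_sup x y,
    fun x y => BoundedContinuousFunction.ext fun ω => (hev ω).map_inf x y⟩

lemma charEval_injective (hsep : ∀ a ≠ 0, ∃ ω, ev ω a ≠ 0) :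
    Function.Injective (charEval ev hev) := fun a b hab => by
  by_contra hne
  obtain ⟨ω, hω⟩ := hsep (a - b) (sub_ne_zero.2 hne)
  exact hω (by rw [(hev ω).map_sub, ← charEval_apply ev hev, ← charEval_apply ev hev, hab,
    sub_self])

end CharEval

def CharPair (Z A B : LuRing.{u}) (zA : Z.R → A.R) (zB : Z.R → B.R) : Type u :=
  {ω : (A.R → ℝ) × (B.R → ℝ) // IsChar A ω.1 ∧ IsChar B ω.2 ∧ ω.1 ∘ zA = ω.2 ∘ zB}

namespace CharPair

variable {Z A B : LuRing.{u}} {zA : Z.R → A.R} {zB : Z.R → B.R}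

instance : TopologicalSpace (CharPair Z A B zA zB) := ⊥

instance : DiscreteTopology (CharPair Z A B zA zB) := ⟨rfl⟩

lemma exists_fst_ne_zero (hA : A.Arch) (hzA : LuRingHom Z A zA) (hzB : LuRingHom Z B zB)
    (hiB : Function.Injective zB) {a : A.R} (ha : a ≠ 0) :
    ∃ ω : CharPair Z A B zA zB, ω.1.1 a ≠ 0 := by
  obtain ⟨φ, hφ, hφa⟩ := exists_isChar_apply_ne_zero hA ha
  obtain ⟨ψ, hψ, hψφ⟩ := exists_isChar_comp_eq hzB hiB (hφ.comp hzA)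
  exact ⟨⟨(φ, ψ), hφ, hψ, hψφ.symm⟩, hφa⟩

lemma exists_snd_ne_zero (hB : B.Arch) (hzA : LuRingHom Z A zA) (hzB : LuRingHom Z B zB)
    (hiA : Function.Injective zA) {b : B.R} (hb : b ≠ 0) :
    ∃ ω : CharPair Z A B zA zB, ω.1.2 b ≠ 0 := by
  obtain ⟨ψ, hψ, hψb⟩ := exists_isChar_apply_ne_zero hB hb
  obtain ⟨φ, hφ, hφψ⟩ := exists_isChar_comp_eq hzA hiA (hψ.comp hzB)
  exact ⟨⟨(φ, ψ), hφ, hψ, hφψ⟩, hψb⟩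

end CharPair

theorem stmt15_general (Z A B : LuRing.{u}) (hA : A.Arch) (hB : B.Arch)
    (zA : Z.R → A.R) (zB : Z.R → B.R)
    (hzA : LuRingHom Z A zA) (hzB : LuRingHom Z B zB)
    (hiA : Function.Injective zA) (hiB : Function.Injective zB) :
    ∃ (E : LuRing.{u}) (fA : A.R → E.R) (fB : B.R → E.R),
      E.Arch ∧ LuRingHom A E fA ∧ LuRingHom B E fB ∧
      Function.Injective fA ∧ Function.Injective fB ∧ fA ∘ zA = fB ∘ zB := by
  let evA (ω : CharPair Z A B zA zB) : A.R → ℝ := ω.1.1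
  let evB (ω : CharPair Z A B zA zB) : B.R → ℝ := ω.1.2
  have hevA (ω : CharPair Z A B zA zB) : IsChar A (evA ω) := ω.2.1
  have hevB (ω : CharPair Z A B zA zB) : IsChar B (evB ω) := ω.2.2.1
  refine ⟨boundedFunctions (CharPair Z A B zA zB), charEval evA hevA, charEval evB hevB,
    boundedFunctions_arch _, luRingHom_charEval evA hevA, luRingHom_charEval evB hevB,
    charEval_injective evA hevA fun a ha => CharPair.exists_fst_ne_zero hA hzA hzB hiB ha,
    charEval_injective evB hevB fun b hb => CharPair.exists_snd_ne_zero hB hzA hzB hiA hb, ?_⟩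
  funext z
  exact BoundedContinuousFunction.ext fun ω => congrFun ω.2.2.2 z

/-- unital Archimedean ℓu-rings have the amalgamation property. -/
theorem stmt15 (Z A B : LuRing.{u}) (hZ : Z.Arch) (hA : A.Arch) (hB : B.Arch)
    (zA : Z.R → A.R) (zB : Z.R → B.R)
    (hzA : LuRingHom Z A zA) (hzB : LuRingHom Z B zB)
    (hiA : Function.Injective zA) (hiB : Function.Injective zB) :
    ∃ (E : LuRing.{u}) (fA : A.R → E.R) (fB : B.R → E.R),
      E.Arch ∧ LuRingHom A E fA ∧ LuRingHom B E fB ∧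
      Function.Injective fA ∧ Function.Injective fB ∧ fA ∘ zA = fB ∘ zB :=
  stmt15_general Z A B hA hB zA zB hzA hzB hiA hiB
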